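/- Let 0 → M_0 →(i) M →(p) M_1 → 0 be an admissible exact sequence in A, and assume every object of A is Artinian (satisfies the descending chain condition on subobjects). Then for each subobject N_1' ⊆ M_1 there exists a universal lift: a subobject N' ⊆ M with p(N') = N_1' such that every subobject of M whose image under p is N_1' contains N'. Moreover, universal lifts are closed under sums: if N' and N'' are the universal lifts of N_1' and N_1'' respectively, then N' + N'' is the universal lift of N_1' + N_1''. -/

import Mathlib

set_option maxHeartbeats 1000000
set_option synthInstance.maxHeartbeats 400000

open CategoryTheory CategoryTheory.Limits ZeroObject

universe v u

attribute [local instance] CategoryTheory.Abelian.hasFiniteBiproducts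

variable {A : Type u} [Category.{v} A] [Abelian A] [CategoryTheory.Linear ℚ A]

/-- An Abelian subcategory of `A`: a class of objects containing `0` and closed under
subobjects, quotients and finite direct sums (so that the corresponding full subcategory
is Abelian and the inclusion is exact). -/
structure AbelianSubcat (A : Type u) [Category.{v} A] [Abelian A]
    [CategoryTheory.Linear ℚ A] where
  P : A → Prop
  zero_mem : P 0
  mem_of_mono : ∀ {X Y : A} (f : X ⟶ Y), Mono f → P Y → P X
  mem_of_epi : ∀ {X Y : A} (f : X ⟶ Y), Epi f → P X → P Y
  mem_biprod : ∀ {X Y : A}, P X → P Y → P (X ⊞ Y)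

/-- The two subcategories are orthogonal: `Hom(A_0, A_1) = Hom(A_1, A_0) = 0`. -/
def OrthogonalPair (A0 A1 : AbelianSubcat A) : Prop :=
  (∀ {X Y : A}, A0.P X → A1.P Y → ∀ f : X ⟶ Y, f = 0) ∧
  (∀ {X Y : A}, A1.P X → A0.P Y → ∀ f : X ⟶ Y, f = 0)

/-- An admissible exact sequence `0 → M_0 → M → M_1 → 0` with `M_0 ∈ A_0`, `M_1 ∈ A_1`. -/
structure AdmissibleSeq (A0 A1 : AbelianSubcat A) (M0 M M1 : A)
    (i : M0 ⟶ M) (p : M ⟶ M1) : Prop where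
  zero : i ≫ p = 0
  shortExact : (ShortComplex.mk i p zero).ShortExact
  mem0 : A0.P M0
  mem1 : A1.P M1

/-- The image `p(N)` of a subobject `N ⊆ X` under a morphism `p : X ⟶ Y`. -/
noncomputable def subImg {X Y : A} (p : X ⟶ Y) (N : Subobject X) : Subobject Y :=
  imageSubobject (N.arrow ≫ p)

/-- `N` is the universal lift of the subobject `N₁ ⊆ M_1` along `p : M ↠ M_1`:
`p(N) = N₁`, and every subobject of `M` whose image under `p` is `N₁` contains `N`. -/
def IsUnivLift {X Y : A} (p : X ⟶ Y) (N1 : Subobject Y) (N : Subobject X) : Prop :=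
  subImg p N = N1 ∧ ∀ N' : Subobject X, subImg p N' = N1 → N ≤ N'

/-- `N` is the universal extension of the subobject `N₀ ⊆ M₀sub` (`M₀sub ⊆ M` a given
subobject): `N ∩ M₀sub = N₀`, and every subobject of `M` whose intersection with
`M₀sub` is `N₀` is contained in `N`. -/
def IsUnivExt {X : A} (M0sub : Subobject X) (N0 : Subobject X) (N : Subobject X) : Prop :=
  N ⊓ M0sub = N0 ∧ ∀ N' : Subobject X, N' ⊓ M0sub = N0 → N' ≤ N

/-- The `m`-th power `M^m` of an object (`M^0 = 0`). -/
noncomputable abbrev pow (M : A) (m : ℕ) : A := ⨁ (fun _ : Fin m => M)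

/-- The `n`-th power `f^n : X^n ⟶ Y^n` of a morphism. -/
noncomputable abbrev powMap {X Y : A} (f : X ⟶ Y) (n : ℕ) : pow X n ⟶ pow Y n :=
  biproduct.map (fun _ => f)

/-- The admissible exact sequence `0 → M_0 →i M →p M_1 → 0` is *right saturated* if every
`φ₁ : M_1^n ⟶ M_1^m` has a lift `φ : M^n ⟶ M^m` such that `ker(φ)` is the universal lift
of `ker(φ₁)` along `p^n`. -/
def RightSaturated {M0 M M1 : A} (i : M0 ⟶ M) (p : M ⟶ M1) : Prop :=
  ∀ (n m : ℕ) (φ1 : pow M1 n ⟶ pow M1 m),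
    ∃ φ : pow M n ⟶ pow M m,
      φ ≫ powMap p m = powMap p n ≫ φ1 ∧
      IsUnivLift (powMap p n) (kernelSubobject φ1) (kernelSubobject φ)

/-- The admissible exact sequence `0 → M_0 →i M →p M_1 → 0` is *left saturated* if every
`φ₀ : M_0^n ⟶ M_0^m` has an extension `φ : M^n ⟶ M^m` such that `im(φ)` is the universal
extension of `im(φ₀)` inside `M^m` (relative to the subobject `M_0^m ⊆ M^m`). -/
def LeftSaturated {M0 M M1 : A} (i : M0 ⟶ M) (p : M ⟶ M1) : Prop :=
  ∀ (n m : ℕ) (φ0 : pow M0 n ⟶ pow M0 m),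
    ∃ φ : pow M n ⟶ pow M m,
      powMap i n ≫ φ = φ0 ≫ powMap i m ∧
      IsUnivExt (imageSubobject (powMap i m)) (imageSubobject (φ0 ≫ powMap i m))
        (imageSubobject φ)

/-!
A universal lift of `N₁` is a minimal subobject `N` with `p(N) = N₁`, which exists by the
descending chain condition. The point is that `p(N ∩ N') = p(N)` whenever `p(N) ⊆ p(N')`. Indeed,
with `K = ker p`, the quotient `N / ((N ∩ N') + (N ∩ K))` is a quotient of `N / (N ∩ N')`, which
embeds into `M / N'` inside the image of `K ≅ M₀` (as `N ⊆ N' + K`), so it lies in `A₀`; it is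
also a quotient of `N / (N ∩ K) ≅ p(N) ⊆ M₁`, so it lies in `A₁`. By orthogonality it vanishes,
i.e. `N ⊆ (N ∩ N') + K`. Minimality then forces `N ⊆ N'`, and applied to `N ∩ S` the same fact
shows that the universal lift of `N₁` lies in every `S` with `N₁ ⊆ p(S)`, which gives
closure under sums.
-/

namespace CategoryTheory.Subobject

variable {C : Type*} [Category C]

theorem le_iff_factors_arrow {X : C} {S T : Subobject X} : T ≤ S ↔ S.Factors T.arrow :=
  ⟨fun h => factors_of_le _ h T.factors_self, le_of_factors⟩

variable [Abelian C]

theorem factors_iff_comp_cokernel_π_eq_zero {X Y : C} (S : Subobject Y) (g : X ⟶ Y) :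
    S.Factors g ↔ g ≫ cokernel.π S.arrow = 0 := by
  refine ⟨fun h => ?_, fun h => (factors_iff _ _).2 ⟨_, Abelian.monoLift_comp S.arrow g h⟩⟩
  rw [← S.factorThru_arrow g h, Category.assoc, cokernel.condition, comp_zero]

end CategoryTheory.Subobject

open CategoryTheory.Subobject

namespace CategoryTheory.Limits

variable {C : Type*} [Category C] [Abelian C]

theorem kernelSubobject_cokernel_π {X : C} (S : Subobject X) :
    kernelSubobject (cokernel.π S.arrow) = S :=
  le_antisymm
    (le_iff_factors_arrow.2 <| (factors_iff_comp_cokernel_π_eq_zero _ _).2 <|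
      kernelSubobject_arrow_comp _)
    (le_kernelSubobject _ _ (cokernel.condition _))

theorem imageSubobject_epi_comp {X' X Y : C} (e : X' ⟶ X) [Epi e] (f : X ⟶ Y) :
    imageSubobject (e ≫ f) = imageSubobject f := by
  have := isIso_of_mono_of_epi (image.preComp e f)
  exact le_antisymm (imageSubobject_comp_le e f)
    (mk_le_mk_of_comm (inv (image.preComp e f)) (by simp))

theorem kernelSubobject_arrow_comp_le {X Y Z : C} {N : Subobject X} {g : X ⟶ Y} {h : X ⟶ Z}
    (H : N ⊓ kernelSubobject g ≤ kernelSubobject h) :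
    kernelSubobject (N.arrow ≫ g) ≤ kernelSubobject (N.arrow ≫ h) := by
  set k := (kernelSubobject (N.arrow ≫ g)).arrow
  have hk : (N ⊓ kernelSubobject g).Factors (k ≫ N.arrow) :=
    (inf_factors _).2 ⟨factors_comp_arrow _,
      kernelSubobject_factors _ _ (by rw [Category.assoc, kernelSubobject_arrow_comp])⟩
  refine le_kernelSubobject _ _ ?_
  rw [← Category.assoc]
  exact (kernelSubobject_factors_iff _ _).1 (factors_of_le _ H hk)

end CategoryTheory.Limits

section SubImg

variable {C : Type*} [Category C] [Abelian C]

theorem subImg_le_iff_factors {X Y : C} (f : X ⟶ Y) (N : Subobject X) (Z : Subobject Y) :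
    subImg f N ≤ Z ↔ Z.Factors (N.arrow ≫ f) :=
  ⟨fun h => factors_of_le _ h (by
    have := imageSubobject_factors_comp_self (N.arrow ≫ f) (𝟙 _)
    rwa [Category.id_comp] at this),
    fun h => imageSubobject_le _ _ (Z.factorThru_arrow _ h)⟩

theorem subImg_gc {X Y : C} (f : X ⟶ Y) :
    GaloisConnection (subImg f) (Subobject.pullback f).obj := fun N Z => by
  rw [subImg_le_iff_factors, le_iff_factors_arrow, pullback_factors_iff]

theorem subImg_mono {X Y : C} (f : X ⟶ Y) : Monotone (subImg f) :=
  (subImg_gc f).monotone_l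

theorem subImg_sup {X Y : C} (f : X ⟶ Y) (N N' : Subobject X) :
    subImg f (N ⊔ N') = subImg f N ⊔ subImg f N' :=
  (subImg_gc f).l_sup

theorem subImg_eq_bot_of_le_kernelSubobject {X Y : C} {f : X ⟶ Y} {N : Subobject X}
    (h : N ≤ kernelSubobject f) : subImg f N = ⊥ := by
  simp only [subImg, (kernelSubobject_factors_iff f _).1 (le_iff_factors_arrow.1 h),
    imageSubobject_zero]

theorem subImg_pullback_of_epi {X Y : C} (f : X ⟶ Y) [Epi f] (Z : Subobject Y) :
    subImg f ((Subobject.pullback f).obj Z) = Z := by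
  have hpb := Subobject.isPullback f Z
  have : Epi (Subobject.pullbackπ f Z) := by
    rw [← hpb.isoPullback_hom_fst]
    infer_instance
  simp only [subImg, ← hpb.w, imageSubobject_epi_comp, imageSubobject_mono, mk_arrow]

theorem le_sup_kernelSubobject_of_subImg_le {X Y : C} (f : X ⟶ Y) [Epi f] {N N' : Subobject X}
    (h : subImg f N ≤ subImg f N') : N ≤ N' ⊔ kernelSubobject f := by
  set V := N' ⊔ kernelSubobject f
  have hker : kernel.ι f ≫ cokernel.π V.arrow = 0 :=
    (factors_iff_comp_cokernel_π_eq_zero _ _).1 <| factors_of_le _ le_sup_right <|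
      kernelSubobject_factors _ _ (kernel.condition f)
  set t := Abelian.epiDesc f _ hker
  have ht : (subImg f N').arrow ≫ t = 0 :=
    imageSubobject_arrow_comp_eq_zero <| by
      rw [Category.assoc, Abelian.comp_epiDesc, ← factors_iff_comp_cokernel_π_eq_zero]
      exact factors_of_le _ le_sup_left N'.factors_self
  rw [le_iff_factors_arrow, factors_iff_comp_cokernel_π_eq_zero, ← Abelian.comp_epiDesc f _ hker,
    ← Category.assoc, ← factorThru_arrow _ _ ((subImg_le_iff_factors f N _).1 h), Category.assoc,
    ht, comp_zero]

end SubImg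

namespace AbelianSubcat

variable (S : AbelianSubcat A)

theorem mem_of_le {X : A} {U V : Subobject X} (h : U ≤ V) (hV : S.P V) : S.P U :=
  S.mem_of_mono (Subobject.ofLE U V h) inferInstance hV

theorem mem_imageSubobject {X Y : A} (f : X ⟶ Y) (hX : S.P X) : S.P (imageSubobject f) :=
  S.mem_of_epi (factorThruImageSubobject f) inferInstance hX

theorem mem_imageSubobject_of_kernelSubobject_le {X Y Z : A} {φ : X ⟶ Y} {q : X ⟶ Z}
    (hker : kernelSubobject φ ≤ kernelSubobject q) (hφ : S.P (imageSubobject φ)) :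
    S.P (imageSubobject q) := by
  have hz : kernel.ι (factorThruImageSubobject φ) ≫ q = 0 := by
    refine (kernelSubobject_factors_iff q _).1 (factors_of_le _ hker ?_)
    refine kernelSubobject_factors _ _ ?_
    simpa only [imageSubobject_arrow_comp, zero_comp] using
      kernel.condition_assoc (factorThruImageSubobject φ) (imageSubobject φ).arrow
  rw [← Abelian.comp_epiDesc _ q hz]
  exact S.mem_of_le (imageSubobject_comp_le _ _) (S.mem_imageSubobject _ hφ)

end AbelianSubcat

theorem OrthogonalPair.eq_zero_of_mem_imageSubobject {A0 A1 : AbelianSubcat A}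
    (horth : OrthogonalPair A0 A1) {X Y : A} (q : X ⟶ Y) (h0 : A0.P (imageSubobject q))
    (h1 : A1.P (imageSubobject q)) : q = 0 := by
  rw [← imageSubobject_arrow_comp q, ← Category.id_comp (imageSubobject q).arrow,
    horth.1 h0 h1 (𝟙 _), zero_comp, comp_zero]

section UniversalLift

variable {A0 A1 : AbelianSubcat A} (horth : OrthogonalPair A0 A1) {M M1 : A} (p : M ⟶ M1) [Epi p]
  (hK : A0.P (kernelSubobject p)) (hM1 : A1.P M1)
include horth hK hM1

theorem subImg_inf_eq_of_subImg_le {N N' : Subobject M} (h : subImg p N ≤ subImg p N') :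
    subImg p (N ⊓ N') = subImg p N := by
  set K := kernelSubobject p
  set V := N ⊓ N' ⊔ K
  have h0 : A0.P (imageSubobject (N.arrow ≫ cokernel.π N'.arrow)) := by
    have hle : subImg (cokernel.π N'.arrow) N ≤ subImg (cokernel.π N'.arrow) K :=
      calc subImg (cokernel.π N'.arrow) N
          ≤ subImg (cokernel.π N'.arrow) (N' ⊔ K) :=
            subImg_mono _ (le_sup_kernelSubobject_of_subImg_le p h)
        _ = subImg (cokernel.π N'.arrow) K := by
            rw [subImg_sup, subImg_eq_bot_of_le_kernelSubobject
              (kernelSubobject_cokernel_π N').ge, bot_sup_eq]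
    exact A0.mem_of_le hle (A0.mem_imageSubobject _ hK)
  have h1 : A1.P (imageSubobject (N.arrow ≫ p)) :=
    A1.mem_of_mono (imageSubobject _).arrow inferInstance hM1
  have hq : N.arrow ≫ cokernel.π V.arrow = 0 := by
    refine horth.eq_zero_of_mem_imageSubobject _
      (A0.mem_imageSubobject_of_kernelSubobject_le (kernelSubobject_arrow_comp_le ?_) h0)
      (A1.mem_imageSubobject_of_kernelSubobject_le (kernelSubobject_arrow_comp_le ?_) h1)
    · rw [kernelSubobject_cokernel_π, kernelSubobject_cokernel_π]
      exact le_sup_left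
    · rw [kernelSubobject_cokernel_π]
      exact inf_le_right.trans le_sup_right
  have hNV : N ≤ V := le_iff_factors_arrow.2 ((factors_iff_comp_cokernel_π_eq_zero _ _).2 hq)
  refine le_antisymm (subImg_mono p inf_le_left) ?_
  calc subImg p N ≤ subImg p V := subImg_mono p hNV
    _ = subImg p (N ⊓ N') := by
      rw [subImg_sup, subImg_eq_bot_of_le_kernelSubobject le_rfl, sup_bot_eq]

theorem IsUnivLift.le_of_le_subImg {N1 : Subobject M1} {N S : Subobject M}
    (hN : IsUnivLift p N1 N) (hS : N1 ≤ subImg p S) : N ≤ S :=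
  (hN.2 _ ((subImg_inf_eq_of_subImg_le horth p hK hM1 (hN.1 ▸ hS)).trans hN.1)).trans inf_le_right

theorem isUnivLift_of_minimal {N1 : Subobject M1} {N : Subobject M}
    (hN : Minimal (fun W => subImg p W = N1) N) : IsUnivLift p N1 N := by
  refine ⟨hN.prop, fun N' hN' => inf_eq_left.1 (hN.eq_of_le ?_ inf_le_left)⟩
  exact (subImg_inf_eq_of_subImg_le horth p hK hM1 (hN.prop.trans hN'.symm).le).trans hN.prop

theorem exists_isUnivLift [WellFoundedLT (Subobject M)] (N1 : Subobject M1) :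
    ∃ N, IsUnivLift p N1 N :=
  have ⟨N, hN⟩ := exists_minimal_of_wellFoundedLT (fun W => subImg p W = N1)
    ⟨_, subImg_pullback_of_epi p N1⟩
  ⟨N, isUnivLift_of_minimal horth p hK hM1 hN⟩

theorem IsUnivLift.sup {N1 N1' : Subobject M1} {N N' : Subobject M} (hN : IsUnivLift p N1 N)
    (hN' : IsUnivLift p N1' N') : IsUnivLift p (N1 ⊔ N1') (N ⊔ N') :=
  ⟨by rw [subImg_sup, hN.1, hN'.1], fun _ hS =>
    sup_le (hN.le_of_le_subImg horth p hK hM1 (hS ▸ le_sup_left))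
      (hN'.le_of_le_subImg horth p hK hM1 (hS ▸ le_sup_right))⟩

end UniversalLift

theorem AdmissibleSeq.mem_kernelSubobject {A0 A1 : AbelianSubcat A} {M0 M M1 : A} {i : M0 ⟶ M}
    {p : M ⟶ M1} (hadm : AdmissibleSeq A0 A1 M0 M M1 i p) : A0.P (kernelSubobject p) := by
  have hexact : imageSubobject i = kernelSubobject p :=
    (ShortComplex.exact_iff_image_eq_kernel _).1 hadm.shortExact.exact
  rw [← hexact]
  exact A0.mem_imageSubobject i hadm.mem0

/-- **Lemma (`LEMMAUNIVERSAL` 1).** Let `0 → M_0 →i M →p M_1 → 0` be an admissible exact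
sequence and assume every object of `A` is Artinian (DCC on subobjects). Then every
subobject `N₁ ⊆ M_1` admits a universal lift `N ⊆ M`; moreover universal lifts are closed
under sums. -/
theorem exists_universal_lift (A0 A1 : AbelianSubcat A) (horth : OrthogonalPair A0 A1)
    (M0 M M1 : A) (i : M0 ⟶ M) (p : M ⟶ M1) (hadm : AdmissibleSeq A0 A1 M0 M M1 i p)
    (hart : ∀ X : A, WellFoundedLT (Subobject X)) :
    (∀ N1 : Subobject M1, ∃ N : Subobject M, IsUnivLift p N1 N) ∧
    (∀ (N1 N1' : Subobject M1) (N N' : Subobject M),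
      IsUnivLift p N1 N → IsUnivLift p N1' N' → IsUnivLift p (N1 ⊔ N1') (N ⊔ N')) := by
  have := hadm.shortExact.epi_g
  have := hart M
  have hK := hadm.mem_kernelSubobject
  exact ⟨exists_isUnivLift horth p hK hadm.mem1,
    fun _ _ _ _ hN hN' => hN.sup horth p hK hadm.mem1 hN'⟩
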